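/- Let X_1, …, X_N be sets and suppose the cost c : X_1 × ⋯ × X_N → ℝ decomposes as c(x_1,…,x_N) = ∑_{1≤i<j≤N} c_{i,j}(x_i,x_j) with each c_{i,j} : X_i × X_j → ℝ real-valued. Let Γ ⊆ X_1 × ⋯ × X_N and for each 1 ≤ i < j ≤ N let Γ_{i,j} be the projection of Γ onto X_i × X_j. If every Γ_{i,j} is c_{i,j}-cyclically monotone, then Γ is c-cyclically monotone in the multimarginal sense and, moreover, Γ is c-splitting: there exists a (Γ,c)-splitting tuple (φ_1, …, φ_N). -/

import Mathlib

/-- A set `S ⊆ X × Y` is `d`-cyclically monotone (two-marginal, real-valued cost). -/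
def CCyclicallyMonotone {X Y : Type*} (d : X → Y → ℝ) (S : Set (X × Y)) : Prop :=
  ∀ (k : ℕ) (p : Fin k → X × Y), (∀ i, p i ∈ S) →
    ∀ σ : Equiv.Perm (Fin k),
      ∑ i, d (p i).1 (p i).2 ≤ ∑ i, d (p i).1 (p (σ i)).2

/-- A set `Γ ⊆ X₀ × ⋯ × X_N` is `c`-cyclically monotone (multimarginal sense). -/
def MultiCCyclicallyMonotone {N : ℕ} {X : Fin (N + 1) → Type*}
    (c : (∀ j, X j) → ℝ) (Γ : Set (∀ j, X j)) : Prop :=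
  ∀ (k : ℕ) (p : Fin k → ∀ j, X j), (∀ i, p i ∈ Γ) →
    ∀ σ : Fin (N + 1) → Equiv.Perm (Fin k), σ 0 = 1 →
      ∑ i, c (p i) ≤ ∑ i, c (fun j => p (σ j i) j)

/-!
Rockafellar's construction splits each pairwise projection `Γᵢⱼ`: fixing `(x₀, y₀) ∈ Γᵢⱼ`, the
potential of `x` is the infimum, over chains `(x₁, y₁), …, (xₙ, yₙ)` in `Γᵢⱼ`, of the cost of the
path `x → y₁, x₁ → y₂, …, xₙ → y₀` minus `∑ₖ cᵢⱼ(xₖ, yₖ)`. Cyclic monotonicity of the closed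
cycle through `(x₀, y₀)` and `(x, y) ∈ Γᵢⱼ` bounds it below, and prepending `(x, y)` to a chain
gives the potential inequality. Since `c` is the sum of the `cᵢⱼ`, summing the pairwise
inequalities over `i < j` gives multimarginal cyclic monotonicity, and grouping the pairwise
splitting functions by coordinate, `φⱼ = ∑_{j<b} φⱼ_b + ∑_{a<j} ψₐⱼ`, gives a splitting tuple.
-/

open Finset

theorem EReal.coe_finset_sum {α : Type*} (s : Finset α) (f : α → ℝ) :
    ((∑ a ∈ s, f a : ℝ) : EReal) = ∑ a ∈ s, (f a : EReal) :=
  map_sum (⟨⟨(↑), EReal.coe_zero⟩, EReal.coe_add⟩ : ℝ →+ EReal) f s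

section TwoMarginal

variable {X Y : Type*} {d : X → Y → ℝ} {S : Set (X × Y)}

theorem CCyclicallyMonotone.sum_le_sum_perm (hS : CCyclicallyMonotone d S) {k : ℕ}
    {p : Fin k → X × Y} (hp : ∀ i, p i ∈ S) (σ τ : Equiv.Perm (Fin k)) :
    ∑ i, d (p i).1 (p i).2 ≤ ∑ i, d (p (σ i)).1 (p (τ i)).2 :=
  calc ∑ i, d (p i).1 (p i).2 ≤ ∑ i, d (p i).1 (p ((σ.symm.trans τ) i)).2 := hS k p hp _
    _ = ∑ i, d (p (σ i)).1 (p (τ i)).2 := by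
      rw [← Equiv.sum_comp σ]
      simp

variable (d) in
/-- `d x (q 0).2 + d (q 0).1 (q 1).2 + ⋯ + d (q (n - 1)).1 y`. -/
def chainCost (x : X) (y : Y) {n : ℕ} (q : Fin n → X × Y) : ℝ :=
  ∑ i, d (Fin.cons (α := fun _ => X) x (Prod.fst ∘ q) i)
    (Fin.snoc (α := fun _ => Y) (Prod.snd ∘ q) y i)

theorem chainCost_cons (x : X) (y : Y) {n : ℕ} (a : X × Y) (q : Fin n → X × Y) :
    chainCost d x y (Fin.cons a q) = d x a.2 + chainCost d a.1 y q := by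
  simp only [chainCost, Fin.comp_cons, ← Fin.cons_snoc_eq_snoc_cons, Fin.sum_univ_succ,
    Fin.cons_zero, Fin.cons_succ]

theorem CCyclicallyMonotone.add_sum_le_chainCost (hS : CCyclicallyMonotone d S) {b : X × Y}
    (hb : b ∈ S) {n : ℕ} {q : Fin n → X × Y} (hq : ∀ i, q i ∈ S) :
    d b.1 b.2 + ∑ i, d (q i).1 (q i).2 ≤ chainCost d b.1 b.2 q := by
  set p : Fin (n + 1) → X × Y := Fin.cons b q
  calc d b.1 b.2 + ∑ i, d (q i).1 (q i).2 = ∑ i, d (p i).1 (p i).2 := by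
        simp [p, Fin.sum_univ_succ]
    _ ≤ ∑ i, d (p i).1 (p (finRotate _ i)).2 := hS _ p (Fin.cases hb hq) _
    _ = chainCost d b.1 b.2 q := by
        simp only [p, chainCost, ← Fin.comp_cons, Fin.snoc_eq_cons_rotate]
        rfl

theorem CCyclicallyMonotone.exists_potential (hS : CCyclicallyMonotone d S) :
    ∃ u : X → ℝ, ∀ ⦃x y⦄, (x, y) ∈ S → ∀ ⦃x' y'⦄, (x', y') ∈ S →
      u x' ≤ u x + d x' y - d x y := by
  rcases S.eq_empty_or_nonempty with rfl | ⟨⟨x₀, y₀⟩, h₀⟩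
  · exact ⟨0, by simp⟩
  let excess (x : X) (q : Σ n, Fin n → S) : ℝ :=
    chainCost d x y₀ (Subtype.val ∘ q.2) - ∑ i, d (q.2 i).1.1 (q.2 i).1.2
  have excess_cons (x' x : X) (y : Y) (hxy : (x, y) ∈ S) (q : Σ n, Fin n → S) :
      excess x' ⟨_, Fin.cons ⟨(x, y), hxy⟩ q.2⟩ = d x' y - d x y + excess x q := by
    simp only [excess, Fin.comp_cons, chainCost_cons, Fin.sum_univ_succ, Fin.cons_zero,
      Fin.cons_succ]
    ring
  have excess_bddBelow {x y} (hxy : (x, y) ∈ S) : BddBelow (Set.range (excess x)) := by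
    refine ⟨d x₀ y₀ + d x y - d x₀ y, ?_⟩
    rintro _ ⟨q, rfl⟩
    have hcycle := hS.add_sum_le_chainCost h₀ (q := Fin.cons (x, y) (Subtype.val ∘ q.2))
      (Fin.cases hxy fun i => (q.2 i).2)
    simp only [chainCost_cons, Fin.sum_univ_succ, Fin.cons_zero, Fin.cons_succ,
      Function.comp_apply] at hcycle
    simp only [excess]
    linarith
  have : Nonempty (Σ n, Fin n → S) := ⟨⟨0, Fin.elim0⟩⟩
  refine ⟨fun x => ⨅ q, excess x q, fun x y hxy x' y' hx'y' => ?_⟩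
  have hinf : (⨅ q, excess x' q) - (d x' y - d x y) ≤ ⨅ q, excess x q :=
    le_ciInf fun q => by
      have hq := ciInf_le (excess_bddBelow hx'y') ⟨_, Fin.cons ⟨(x, y), hxy⟩ q.2⟩
      rw [excess_cons] at hq
      linarith
  dsimp only
  linarith

theorem CCyclicallyMonotone.exists_splitting (hS : CCyclicallyMonotone d S) :
    ∃ (φ : X → EReal) (ψ : Y → EReal), (∀ x, φ x ≠ ⊤) ∧ (∀ y, ψ y ≠ ⊤) ∧
      (∀ x y, φ x + ψ y ≤ d x y) ∧ ∀ p ∈ S, φ p.1 + ψ p.2 = d p.1 p.2 := by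
  classical
  obtain ⟨u, hu⟩ := hS.exists_potential
  -- By the potential inequality in both directions, `ψ y` does not depend on the chosen `x`.
  refine ⟨fun x => if ∃ y, (x, y) ∈ S then (u x : EReal) else ⊥,
    fun y => if h : ∃ x, (x, y) ∈ S then ((d h.choose y - u h.choose : ℝ) : EReal) else ⊥,
    fun x => by dsimp only; split_ifs; exacts [EReal.coe_ne_top _, bot_ne_top],
    fun y => by dsimp only; split_ifs; exacts [EReal.coe_ne_top _, bot_ne_top],
    fun x y => ?_, ?_⟩
  · dsimp only
    split_ifs with hx hy
    · obtain ⟨y', hxy'⟩ := hx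
      have hpot := hu hy.choose_spec hxy'
      exact_mod_cast (by linarith : u x + (d hy.choose y - u hy.choose) ≤ d x y)
    all_goals simp
  · rintro ⟨x, y⟩ hxy
    have hy : ∃ x', (x', y) ∈ S := ⟨x, hxy⟩
    dsimp only
    rw [if_pos ⟨y, hxy⟩, dif_pos hy]
    have h₁ := hu hxy hy.choose_spec
    have h₂ := hu hy.choose_spec hxy
    exact_mod_cast (by linarith : u x + (d hy.choose y - u hy.choose) = d x y)

end TwoMarginal

theorem MultiCCyclicallyMonotone.of_sum_pairs {N : ℕ} {X : Fin (N + 1) → Type*}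
    {cij : ∀ i j : Fin (N + 1), X i → X j → ℝ} {c : (∀ j, X j) → ℝ} {Γ : Set (∀ j, X j)}
    (P : Finset (Fin (N + 1) × Fin (N + 1)))
    (hc : ∀ x, c x = ∑ q ∈ P, cij q.1 q.2 (x q.1) (x q.2))
    (hP : ∀ q ∈ P, CCyclicallyMonotone (cij q.1 q.2) ((fun x => (x q.1, x q.2)) '' Γ)) :
    MultiCCyclicallyMonotone c Γ := by
  intro k p hp σ _
  simp only [hc]
  rw [sum_comm, sum_comm (s := univ)]
  exact sum_le_sum fun q hq => (hP q hq).sum_le_sum_perm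
    (p := fun i => (p i q.1, p i q.2)) (fun i => ⟨p i, hp i, rfl⟩) (σ q.1) (σ q.2)

theorem exists_splitting_of_sum_pairs {ι : Type*} [Fintype ι] {X : ι → Type*}
    {cij : ∀ i j, X i → X j → ℝ} {c : (∀ j, X j) → ℝ} {Γ : Set (∀ j, X j)}
    (P : Finset (ι × ι)) (hc : ∀ x, c x = ∑ q ∈ P, cij q.1 q.2 (x q.1) (x q.2))
    (hP : ∀ q ∈ P, CCyclicallyMonotone (cij q.1 q.2) ((fun x => (x q.1, x q.2)) '' Γ)) :
    ∃ φ : ∀ j, X j → EReal, (∀ j x, φ j x ≠ ⊤) ∧ (∀ x, ∑ j, φ j (x j) ≤ c x) ∧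
      ∀ x ∈ Γ, ∑ j, φ j (x j) = c x := by
  classical
  have hsplit (a b : ι) (hab : (a, b) ∈ P) := (hP (a, b) hab).exists_splitting
  choose! Φ Ψ hΦ hΨ hle heq using hsplit
  let φ (j : ι) (x : X j) : EReal :=
    ∑ b ∈ univ.filter (fun b => (j, b) ∈ P), Φ j b x +
      ∑ a ∈ univ.filter (fun a => (a, j) ∈ P), Ψ a j x
  have sum_φ (x : ∀ j, X j) :
      ∑ j, φ j (x j) = ∑ q ∈ P, (Φ q.1 q.2 (x q.1) + Ψ q.1 q.2 (x q.2)) := by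
    rw [sum_add_distrib, sum_add_distrib]
    congr 1
    · exact (sum_finset_product' P univ _ (by simp) (f := fun a b => Φ a b (x a))).symm
    · exact (sum_finset_product_right' P univ _ (by simp) (f := fun a b => Ψ a b (x b))).symm
  refine ⟨φ, fun j x => ?_, fun x => ?_, fun x hx => ?_⟩
  · refine EReal.add_ne_top ?_ ?_ <;>
      refine sum_induction _ (· ≠ ⊤) (fun _ _ => EReal.add_ne_top) EReal.zero_ne_top ?_ <;>
      intro i hi
    · exact hΦ j i (mem_filter.1 hi).2 x
    · exact hΨ i j (mem_filter.1 hi).2 x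
  · rw [sum_φ, hc, EReal.coe_finset_sum]
    exact sum_le_sum fun q hq => hle q.1 q.2 hq _ _
  · rw [sum_φ, hc, EReal.coe_finset_sum]
    exact sum_congr rfl fun q hq => heq q.1 q.2 hq _ ⟨x, hx, rfl⟩

/-- **Bartz–Bauschke–Wang.** If a real-valued cost decomposes as
`c(x₁,…,x_N) = ∑_{i<j} c_{i,j}(x_i,x_j)` and every projection `Γ_{i,j}` of `Γ` onto
`X_i × X_j` is `c_{i,j}`-cyclically monotone, then `Γ` is `c`-cyclically monotone in
the multimarginal sense and moreover `Γ` is `c`-splitting. -/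
theorem multiCCyclicallyMonotone_and_splitting_of_pairwise
    {N : ℕ} {X : Fin (N + 1) → Type*}
    (cij : ∀ i j : Fin (N + 1), X i → X j → ℝ)
    (c : (∀ j, X j) → ℝ)
    (hc : ∀ x, c x =
      ∑ q ∈ Finset.univ.filter (fun q : Fin (N + 1) × Fin (N + 1) => q.1 < q.2),
        cij q.1 q.2 (x q.1) (x q.2))
    (Γ : Set (∀ j, X j))
    (hproj : ∀ i j : Fin (N + 1), i < j →
      CCyclicallyMonotone (cij i j) ((fun x : ∀ l, X l => (x i, x j)) '' Γ)) :
    MultiCCyclicallyMonotone c Γ ∧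
      ∃ φ : ∀ j, X j → EReal,
        (∀ j x, φ j x ≠ ⊤) ∧
        (∀ x : ∀ j, X j, ∑ j, φ j (x j) ≤ (c x : EReal)) ∧
        (∀ x ∈ Γ, ∑ j, φ j (x j) = (c x : EReal)) := by
  have hP : ∀ q ∈ univ.filter (fun q : Fin (N + 1) × Fin (N + 1) => q.1 < q.2),
      CCyclicallyMonotone (cij q.1 q.2) ((fun x => (x q.1, x q.2)) '' Γ) :=
    fun q hq => hproj q.1 q.2 (mem_filter.1 hq).2
  exact ⟨.of_sum_pairs _ hc hP, exists_splitting_of_sum_pairs _ hc hP⟩
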